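/- arXiv:2401.17570 — 5 statements merged into one kernel-verified Lean document; each statement's English description precedes it below -/
import Mathlib

section
/- Let m ≥ 3 and δ ∈ [0,1]. Suppose w_0, w_1, ..., w_{m-1} are real numbers with each w_b ∈ [0, 1/m] and ∑_{b=0}^{m-1} w_b = δ. Then |∑_{b=0}^{m-1} e(b/m) w_b| ≤ |sin(π⌊δm⌋/m)/(m sin(π/m)) + (δ - ⌊δm⌋/m)·e((⌊δm⌋+1)/(2m))|, where e(x) = exp(2πix). -/
open Complex Real
open Fin.NatCast

/-- `e(x) = exp(2πi x)`. -/
noncomputable def e (x : ℝ) : ℂ := Complex.exp (2 * Real.pi * Complex.I * x)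

lemma e_eq (x : ℝ) : e x = Complex.exp (((2 * Real.pi * x : ℝ)) * Complex.I) := by
  unfold e; congr 1; push_cast; ring

lemma e_add (x y : ℝ) : e (x + y) = e x * e y := by
  unfold e; rw [← Complex.exp_add]; push_cast; ring_nf

lemma e_int (n : ℤ) : e n = 1 := by
  unfold e
  rw [show (2 * (Real.pi:ℂ) * Complex.I * (n:ℝ)) = (n:ℤ) * (2 * Real.pi * Complex.I) by push_cast; ring]
  exact Complex.exp_int_mul_two_pi_mul_I n

lemma abs_e (x : ℝ) : ‖e x‖ = 1 := by
  rw [e_eq]; exact Complex.norm_exp_ofReal_mul_I _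

lemma conj_e (x : ℝ) : (starRingEnd ℂ) (e x) = e (-x) := by
  rw [e_eq, e_eq, ← Complex.exp_conj, map_mul, Complex.conj_ofReal, Complex.conj_I]
  congr 1; push_cast; ring

lemma e_sub_e (x : ℝ) : e x - e (-x) = 2 * Real.sin (2 * Real.pi * x) * Complex.I := by
  rw [e_eq, e_eq]
  rw [show ((2 * Real.pi * (-x) : ℝ) : ℂ) = ((-(2 * Real.pi * x) : ℝ) : ℂ) by push_cast; ring]
  push_cast
  rw [Complex.exp_mul_I, Complex.exp_mul_I]
  simp [Complex.cos_neg, Complex.sin_neg, ← Complex.ofReal_sin]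
  ring

lemma geom_e (m : ℕ) (hm : 3 ≤ m) (k : ℕ) :
    (∑ i ∈ Finset.range k, e (i / m)) =
      e (((k:ℝ) - 1) / (2 * m)) * ((Real.sin (Real.pi * k / m) / Real.sin (Real.pi / m) : ℝ) : ℂ) := by
  have hm0 : (0:ℝ) < m := by positivity
  have hm3 : (3:ℝ) ≤ m := by exact_mod_cast hm
  have hs : Real.sin (Real.pi / m) > 0 := by
    apply Real.sin_pos_of_pos_of_lt_pi
    · positivity
    · rw [div_lt_iff₀ hm0]
      nlinarith [Real.pi_pos]
  set D : ℂ := e (1 / (2 * m)) - e (-(1 / (2 * m))) with hD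
  have e_congr : ∀ {a b : ℝ}, a = b → e a = e b := fun h => by rw [h]
  have harg : 2 * Real.pi * (1 / (2 * (m:ℝ))) = Real.pi / m := by field_simp
  have hDval : D = 2 * (Real.sin (Real.pi / m) : ℝ) * Complex.I := by
    rw [hD, e_sub_e, harg]
  have hDne : D ≠ 0 := by
    rw [hDval]
    exact mul_ne_zero (mul_ne_zero two_ne_zero (Complex.ofReal_ne_zero.mpr (ne_of_gt hs)))
      Complex.I_ne_zero
  set f : ℕ → ℂ := fun i => e ((2 * (i:ℝ) - 1) / (2 * m)) with hf
  have h1 : ∀ i : ℕ, e ((i:ℝ) / m) * D = f (i + 1) - f i := by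
    intro i
    rw [hf, hD, mul_sub, ← e_add, ← e_add]
    push_cast
    congr 2 <;> · field_simp; ring
  have key : (∑ i ∈ Finset.range k, e (i / m)) * D =
      e (((k:ℝ) - 1) / (2 * m)) * ((Real.sin (Real.pi * k / m) / Real.sin (Real.pi / m) : ℝ) : ℂ) * D := by
    rw [Finset.sum_mul]
    rw [Finset.sum_congr rfl (fun i _ => h1 i), Finset.sum_range_sub f k]
    have hf0 : f 0 = e (-(((k:ℝ)) / (2 * m)) + ((k:ℝ) - 1) / (2 * m)) := by
      simp only [hf]; exact e_congr (by push_cast; field_simp; ring)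
    have hfk : f k = e (((k:ℝ)) / (2 * m) + ((k:ℝ) - 1) / (2 * m)) := by
      simp only [hf]; exact e_congr (by field_simp; ring)
    rw [hf0, hfk, e_add, e_add, ← sub_mul, e_sub_e]
    rw [show 2 * Real.pi * ((k:ℝ) / (2 * m)) = Real.pi * k / m by field_simp]
    rw [hDval]
    rw [Complex.ofReal_div]
    have hsne : (Real.sin (Real.pi / m) : ℂ) ≠ 0 := Complex.ofReal_ne_zero.mpr (ne_of_gt hs)
    have h3 : Complex.sin ((Real.pi:ℂ) * ((m:ℂ))⁻¹) ≠ 0 := by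
      rw [show ((Real.pi:ℂ) * ((m:ℂ))⁻¹) = ((Real.pi / m : ℝ) : ℂ) by push_cast; ring,
        ← Complex.ofReal_sin]
      exact hsne
    have h4 : Complex.sin ((Real.pi:ℂ) / (m:ℂ)) ≠ 0 := by
      rw [show ((Real.pi:ℂ) / (m:ℂ)) = ((Real.pi / m : ℝ) : ℂ) by push_cast; ring,
        ← Complex.ofReal_sin]
      exact hsne
    field_simp [h3]
  exact mul_right_cancel₀ hDne key

lemma sum_if_lt (m k : ℕ) (hkm : k ≤ m) (f : ℕ → ℝ) :
    ∑ i ∈ Finset.range m, (if i < k then f i else 0) = ∑ i ∈ Finset.range k, f i := by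
  have h : ∀ i ∈ Finset.range m, (if i < k then f i else 0) = if i ∈ Finset.range k then f i else 0 := by
    intro i _; simp [Finset.mem_range]
  rw [Finset.sum_congr rfl h, Finset.sum_ite_mem]
  congr 1
  ext x; simp [Finset.mem_range]; omega

lemma greedy (m k jj : ℕ) (hkj : k ≤ jj) (hjm : jj < m) (lam : ℝ)
    (c w' : ℕ → ℝ)
    (hw0 : ∀ i < m, 0 ≤ w' i) (hw1 : ∀ i < m, w' i ≤ 1 / m)
    (hc1 : ∀ i < k, c jj ≤ c i) (hc2 : ∀ i, k ≤ i → i < m → c i ≤ c jj)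
    (hsum : ∑ i ∈ Finset.range m, w' i = k / m + lam / m) :
    ∑ i ∈ Finset.range m, w' i * c i ≤ (∑ i ∈ Finset.range k, c i) / m + lam / m * c jj := by
  have hkm : k ≤ m := le_trans hkj (le_of_lt hjm)
  set v : ℕ → ℝ := fun i => (if i < k then (1:ℝ) / m else 0) + (if i = jj then lam / m else 0)
    with hv
  have hvsum : ∑ i ∈ Finset.range m, v i = k / m + lam / m := by
    rw [hv, Finset.sum_add_distrib]
    congr 1
    · rw [sum_if_lt m k hkm, Finset.sum_const, Finset.card_range]
      simp [div_eq_mul_inv, mul_comm]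
    · rw [Finset.sum_ite_eq' (Finset.range m) jj (fun _ => lam / m)]
      simp [Finset.mem_range.mpr hjm]
  have hvc : ∑ i ∈ Finset.range m, v i * c i = (∑ i ∈ Finset.range k, c i) / m + lam / m * c jj := by
    rw [hv]
    simp only [add_mul, ite_mul, zero_mul]
    rw [Finset.sum_add_distrib]
    congr 1
    · rw [sum_if_lt m k hkm (fun i => 1 / m * c i), Finset.sum_div]
      exact Finset.sum_congr rfl (fun i _ => by ring)
    · rw [Finset.sum_ite_eq' (Finset.range m) jj (fun i => lam / m * c i)]
      simp [Finset.mem_range.mpr hjm]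
  have key : ∑ i ∈ Finset.range m, (w' i - v i) * (c i - c jj) ≤ 0 := by
    apply Finset.sum_nonpos
    intro i hi
    rw [Finset.mem_range] at hi
    by_cases h1 : i < k
    · have hij : i ≠ jj := by omega
      have : v i = 1 / m := by simp [hv, h1, hij]
      rw [this]
      exact mul_nonpos_of_nonpos_of_nonneg (by linarith [hw1 i hi]) (by linarith [hc1 i h1])
    · by_cases h2 : i = jj
      · simp [h2]
      · have : v i = 0 := by simp [hv, h1, h2]
        rw [this, sub_zero]
        exact mul_nonpos_of_nonneg_of_nonpos (hw0 i hi)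
          (by linarith [hc2 i (le_of_not_gt h1) hi])
  have expand : ∑ i ∈ Finset.range m, (w' i - v i) * (c i - c jj)
      = ∑ i ∈ Finset.range m, w' i * c i - ∑ i ∈ Finset.range m, v i * c i := by
    have h : ∀ i ∈ Finset.range m, (w' i - v i) * (c i - c jj)
        = w' i * c i - v i * c i - (w' i - v i) * c jj := fun i _ => by ring
    rw [Finset.sum_congr rfl h, Finset.sum_sub_distrib, Finset.sum_sub_distrib, ← Finset.sum_mul,
      Finset.sum_sub_distrib, hsum, hvsum]
    simp
  rw [expand, hvc] at key
  linarith

lemma cos_comp {u v : ℝ} (h1 : |u| ≤ v) (h2 : v ≤ Real.pi) : Real.cos v ≤ Real.cos u := by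
  rw [← Real.cos_abs u]
  exact Real.cos_le_cos_of_nonneg_of_le_pi (abs_nonneg u) h2 h1

lemma e_zero : e 0 = 1 := by simpa using e_int 0

lemma e_nat_mul (n : ℕ) (x : ℝ) : e x ^ n = e (n * x) := by
  induction n with
  | zero => simp [show ((0:ℕ):ℝ) * x = 0 from by ring, e_zero]
  | succ n ih =>
    rw [pow_succ, ih, ← e_add]
    congr 1
    push_cast
    ring

set_option maxHeartbeats 1000000 in
theorem stmt_0 (m : ℕ) (hm : 3 ≤ m) (δ : ℝ) (hδ : δ ∈ Set.Icc (0:ℝ) 1)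
    (w : Fin m → ℝ) (hw : ∀ b, w b ∈ Set.Icc (0:ℝ) (1 / m))
    (hsum : ∑ b, w b = δ) :
    ‖(∑ b : Fin m, e ((b : ℝ) / m) * (w b : ℂ))‖ ≤
      ‖
        ((Real.sin (Real.pi * (⌊δ * m⌋ : ℝ) / m) / (m * Real.sin (Real.pi / m)) : ℝ)
          + ((δ - (⌊δ * m⌋ : ℝ) / m : ℝ) : ℂ) * e (((⌊δ * m⌋ : ℝ) + 1) / (2 * m)))‖ := by
  haveI : NeZero m := ⟨by omega⟩
  have hM : (0:ℝ) < m := by positivity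
  have hM3 : (3:ℝ) ≤ m := by exact_mod_cast hm
  have hpi := Real.pi_pos
  by_cases hδ1 : δ = 1
  · -- degenerate case: all weights forced to 1/m, sum of all roots is 0
    subst hδ1
    have hall : ∀ b, w b = 1 / m := by
      have hconst : ∑ _b : Fin m, (1:ℝ) / m = 1 := by
        rw [Finset.sum_const, Finset.card_univ, Fintype.card_fin, nsmul_eq_mul]
        field_simp
      have := (Finset.sum_eq_sum_iff_of_le (fun b _ => (hw b).2)).mp
        (by rw [hsum, hconst])
      exact fun b => this b (Finset.mem_univ b)
    have hx1 : e (1 / (m:ℝ)) ≠ 1 := by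
      rw [e_eq]
      intro h
      rw [Complex.exp_eq_one_iff] at h
      obtain ⟨n, hn⟩ := h
      rw [show ((n:ℂ) * (2 * (Real.pi:ℂ) * Complex.I)) = ((n * (2 * Real.pi) : ℝ) : ℂ) * Complex.I
        by push_cast; ring] at hn
      have h2 : (2 * Real.pi * (1 / (m:ℝ)) : ℝ) = (n * (2 * Real.pi) : ℝ) := by
        have := mul_right_cancel₀ Complex.I_ne_zero hn
        exact_mod_cast this
      have h3 : 1 / (m:ℝ) = (n:ℝ) := by
        have h2' := h2
        field_simp at h2'
        nlinarith [Real.pi_pos]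
      have h4 : 0 < 1 / (m:ℝ) := by positivity
      have h5 : 1 / (m:ℝ) < 1 := by
        rw [div_lt_one hM]; linarith
      rcases le_or_gt n 0 with hn0 | hn0
      · have : (n:ℝ) ≤ 0 := by exact_mod_cast hn0
        linarith
      · have : (1:ℝ) ≤ (n:ℝ) := by exact_mod_cast hn0
        linarith
    have hroots : (∑ b : Fin m, e ((b : ℝ) / m)) = 0 := by
      have hpow : ∀ b : Fin m, e ((b : ℝ) / m) = e (1 / (m:ℝ)) ^ (b : ℕ) := by
        intro b
        rw [e_nat_mul]
        congr 1
        field_simp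
      calc (∑ b : Fin m, e ((b : ℝ) / m)) = ∑ b : Fin m, e (1 / (m:ℝ)) ^ (b : ℕ) :=
            Finset.sum_congr rfl (fun b _ => hpow b)
        _ = ∑ i ∈ Finset.range m, e (1 / (m:ℝ)) ^ i :=
            Fin.sum_univ_eq_sum_range (fun i => e (1 / (m:ℝ)) ^ i) m
        _ = (e (1 / (m:ℝ)) ^ m - 1) / (e (1 / (m:ℝ)) - 1) := geom_sum_eq hx1 m
        _ = 0 := by
            rw [e_nat_mul m (1 / (m:ℝ)), show (m:ℝ) * (1 / m) = ((1:ℤ):ℝ) by push_cast; field_simp,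
              e_int]
            simp
    have hzero : (∑ b : Fin m, e ((b : ℝ) / m) * (w b : ℂ)) = 0 := by
      have : (∑ b : Fin m, e ((b : ℝ) / m) * (w b : ℂ))
          = (∑ b : Fin m, e ((b : ℝ) / m)) * ((1 / m : ℝ) : ℂ) := by
        rw [Finset.sum_mul]
        exact Finset.sum_congr rfl (fun b _ => by rw [hall b])
      rw [this, hroots, zero_mul]
    rw [hzero]
    simp
  -- main case
  have hδ0 : 0 ≤ δ := hδ.1
  have hδlt : δ < 1 := lt_of_le_of_ne hδ.2 hδ1
  set K : ℕ := (⌊δ * m⌋).toNat with hKdef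
  have hfl0 : (0:ℤ) ≤ ⌊δ * (m:ℝ)⌋ := Int.floor_nonneg.mpr (by positivity)
  have hKr : (K : ℝ) = ((⌊δ * (m:ℝ)⌋ : ℤ) : ℝ) := by
    rw [hKdef]; exact_mod_cast congrArg (Int.cast : ℤ → ℝ) (Int.toNat_of_nonneg hfl0)
  have hKlt : K < m := by
    have : ⌊δ * (m:ℝ)⌋ < (m:ℤ) := Int.floor_lt.mpr (by push_cast; nlinarith)
    omega
  have hKle : (K:ℝ) ≤ δ * m := by rw [hKr]; exact Int.floor_le _
  have hKgt : δ * m < (K:ℝ) + 1 := by rw [hKr]; exact Int.lt_floor_add_one _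
  set lam : ℝ := δ * m - K with hlamdef
  have hlam0 : 0 ≤ lam := by simp [hlamdef]; linarith
  have hlam1 : lam ≤ 1 := by simp [hlamdef]; linarith
  set S : ℂ := ∑ b : Fin m, e ((b : ℝ) / m) * (w b : ℂ) with hSdef
  set θ : ℝ := S.arg with hθdef
  set t : ℝ := θ * m / (2 * Real.pi) with htdef
  have hθt : θ = 2 * Real.pi / m * t := by rw [htdef]; field_simp
  set r : ℤ := ⌈t - K / 2⌉ with hrdef
  have hr1 : t - K / 2 ≤ (r:ℝ) := Int.le_ceil _
  have hr2 : (r:ℝ) < t - K / 2 + 1 := by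
    have := Int.ceil_lt_add_one (t - (K:ℝ) / 2); rw [← hrdef] at this; linarith
  set R : ℝ := min ((r:ℝ) + K - t) (t - (r:ℝ) + 1) with hRdef
  have hRlow : (K:ℝ) / 2 ≤ R := le_min (by linarith) (by linarith)
  have hminl : R ≤ (r:ℝ) + K - t := min_le_left _ _
  have hminr : R ≤ t - (r:ℝ) + 1 := min_le_right _ _
  have hRhigh : R ≤ ((K:ℝ) + 1) / 2 := by linarith
  have hKm1 : (K:ℝ) + 1 ≤ m := by exact_mod_cast hKlt
  have hRm : R ≤ (m:ℝ) / 2 := by linarith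
  set c : ℕ → ℝ := fun i => Real.cos (2 * Real.pi / m * ((r:ℝ) + i - t)) with hcdef
  set jj : ℕ := if (r:ℝ) + K - t ≤ t - (r:ℝ) + 1 then K else m - 1 with hjjdef
  have hjjk : K ≤ jj := by rw [hjjdef]; split <;> omega
  have hjjm : jj < m := by rw [hjjdef]; split <;> omega
  have hcjj : c jj = Real.cos (2 * Real.pi / m * R) := by
    rw [hjjdef, hRdef]
    by_cases hif : (r:ℝ) + K - t ≤ t - (r:ℝ) + 1
    · rw [if_pos hif, min_eq_left hif]
    · rw [if_neg hif, min_eq_right (le_of_lt (lt_of_not_ge hif))]; simp only [hcdef]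
      have harg : 2 * Real.pi / m * ((r:ℝ) + ((m-1 : ℕ):ℝ) - t)
          = 2 * Real.pi - 2 * Real.pi / m * (t - (r:ℝ) + 1) := by
        have : ((m - 1 : ℕ) : ℝ) = (m:ℝ) - 1 := by
          have : (1:ℕ) ≤ m := by omega
          push_cast [this]; ring
        rw [this]; field_simp; ring
      rw [harg, Real.cos_two_pi_sub]
  have hangle_le : 2 * Real.pi / m * R ≤ Real.pi := by
    rw [div_mul_eq_mul_div, div_le_iff₀ hM]
    nlinarith
  have hc1 : ∀ i < K, c jj ≤ c i := by
    intro i hi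
    rw [hcjj]; simp only [hcdef]
    apply cos_comp _ hangle_le
    have hb1 : -((K:ℝ)/2) ≤ (r:ℝ) + i - t := by
      have : (0:ℝ) ≤ i := by positivity
      linarith
    have hb2 : (r:ℝ) + i - t ≤ (K:ℝ)/2 := by
      have : (i:ℝ) ≤ (K:ℝ) - 1 := by
        have : (i:ℝ) + 1 ≤ K := by exact_mod_cast hi
        linarith
      linarith
    have habs : |(r:ℝ) + i - t| ≤ (K:ℝ)/2 := abs_le.mpr ⟨hb1, hb2⟩
    rw [abs_mul, abs_of_pos (by positivity : (0:ℝ) < 2 * Real.pi / m)]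
    calc 2 * Real.pi / m * |(r:ℝ) + i - t| ≤ 2 * Real.pi / m * ((K:ℝ)/2) := by
          apply mul_le_mul_of_nonneg_left habs (by positivity)
      _ ≤ 2 * Real.pi / m * R := by
          apply mul_le_mul_of_nonneg_left hRlow (by positivity)
  have hc2 : ∀ i, K ≤ i → i < m → c i ≤ c jj := by
    intro i hik him
    rw [hcjj]; simp only [hcdef]
    have hKi : (K:ℝ) ≤ i := by exact_mod_cast hik
    have hge : R ≤ (r:ℝ) + i - t := by linarith
    by_cases hsp : (r:ℝ) + i - t ≤ (m:ℝ)/2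
    · apply cos_comp
      · rw [abs_mul, abs_of_pos (by positivity : (0:ℝ) < 2 * Real.pi / m),
          _root_.abs_of_nonneg (by linarith : (0:ℝ) ≤ R)]
        apply mul_le_mul_of_nonneg_left hge (by positivity)
      · rw [div_mul_eq_mul_div, div_le_iff₀ hM]; nlinarith
    · push_neg at hsp
      have hcosi : Real.cos (2 * Real.pi / m * ((r:ℝ) + i - t))
          = Real.cos (2 * Real.pi / m * (t - (r:ℝ) - i + m)) := by
        have : 2 * Real.pi / m * ((r:ℝ) + i - t)
            = 2 * Real.pi - 2 * Real.pi / m * (t - (r:ℝ) - i + m) := by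
          field_simp; ring
        rw [this, Real.cos_two_pi_sub]
      rw [hcosi]
      have him1 : (i:ℝ) ≤ (m:ℝ) - 1 := by
        have : (i:ℝ) + 1 ≤ m := by exact_mod_cast him
        linarith
      have hge2 : R ≤ t - (r:ℝ) - i + m := by linarith
      apply cos_comp
      · rw [abs_mul, abs_of_pos (by positivity : (0:ℝ) < 2 * Real.pi / m),
          _root_.abs_of_nonneg (by linarith : (0:ℝ) ≤ R)]
        apply mul_le_mul_of_nonneg_left hge2 (by positivity)
      · rw [div_mul_eq_mul_div, div_le_iff₀ hM]; nlinarith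
  -- reindexing around the circle starting at residue r
  set rn : ℕ := (r % (m:ℤ)).toNat with hrndef
  have hmz : (m:ℤ) ≠ 0 := by exact_mod_cast (by omega : m ≠ 0)
  have hrnz : (rn : ℤ) = r % (m:ℤ) := Int.toNat_of_nonneg (Int.emod_nonneg r hmz)
  set cf : Fin m := (rn : Fin m) with hcfdef
  set w' : ℕ → ℝ := fun i => w (cf + (i : Fin m)) with hw'def
  have reindexC : ∀ (F : Fin m → ℂ), ∑ b, F b = ∑ i ∈ Finset.range m, F (cf + (i : Fin m)) := by
    intro F
    rw [← Fin.sum_univ_eq_sum_range (fun i => F (cf + (i : Fin m))) m]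
    simp only [Fin.cast_val_eq_self]
    exact (Fintype.sum_equiv (Equiv.addLeft cf) (fun i => F (cf + i)) F (fun i => rfl)).symm
  have reindexR : ∀ (F : Fin m → ℝ), ∑ b, F b = ∑ i ∈ Finset.range m, F (cf + (i : Fin m)) := by
    intro F
    rw [← Fin.sum_univ_eq_sum_range (fun i => F (cf + (i : Fin m))) m]
    simp only [Fin.cast_val_eq_self]
    exact (Fintype.sum_equiv (Equiv.addLeft cf) (fun i => F (cf + i)) F (fun i => rfl)).symm
  have hw'sum : ∑ i ∈ Finset.range m, w' i = δ := by
    simp only [hw'def]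
    rw [← reindexR w]
    exact hsum
  have hδKlam : δ = K / m + lam / m := by
    rw [hlamdef]
    field_simp
    ring
  have hw'0 : ∀ i < m, 0 ≤ w' i := fun i _ => (hw _).1
  have hw'1 : ∀ i < m, w' i ≤ 1 / m := fun i _ => (hw _).2
  have hval : ∀ i : ℕ, ∃ s : ℤ, (((cf + (i : Fin m)).val : ℤ)) = r + i + m * s := by
    intro i
    have h1 : (cf + (i : Fin m)).val = (rn + i) % m := by
      rw [Fin.val_add]
      simp only [hcfdef, Fin.val_natCast]
      rw [← Nat.add_mod]
    refine ⟨-(r / m) - (((rn + i) / m : ℕ) : ℤ), ?_⟩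
    have h2 := Int.mul_ediv_add_emod r m
    have h3' : ((m:ℤ)) * (((rn + i) / m : ℕ) : ℤ) + (((rn + i) % m : ℕ) : ℤ) = (rn:ℤ) + i := by
      exact_mod_cast Nat.div_add_mod (rn + i) m
    rw [h1]
    push_cast
    push_cast at h3'
    linear_combination h3' + h2 + hrnz
  have hev : ∀ i : ℕ, e ((((cf + (i : Fin m)) : Fin m) : ℝ) / m) = e (((r:ℝ) + i) / m) := by
    intro i
    obtain ⟨s, hs⟩ := hval i
    have hv : (((cf + (i : Fin m)).val : ℝ)) = (r:ℝ) + i + m * s := by exact_mod_cast hs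
    rw [show (((cf + (i : Fin m)) : Fin m) : ℝ) = (((cf + (i : Fin m)).val : ℝ)) from rfl, hv]
    rw [show ((r:ℝ) + i + m * s) / m = ((r:ℝ) + i) / m + (s:ℤ) by push_cast; field_simp]
    rw [e_add, e_int, mul_one]
  have hc' : ∀ i : ℕ, (Complex.exp (-(θ:ℂ) * Complex.I) * e (((r:ℝ) + i) / m)).re = c i := by
    intro i
    rw [e_eq, ← Complex.exp_add]
    rw [show (-(θ:ℂ) * Complex.I + ((2 * Real.pi * (((r:ℝ) + i) / m) : ℝ) : ℂ) * Complex.I)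
        = ((2 * Real.pi / m * ((r:ℝ) + i - t) : ℝ) : ℂ) * Complex.I by
      push_cast; rw [hθt]; push_cast; ring]
    rw [Complex.exp_ofReal_mul_I_re]
  have hterm : ∀ (x a : ℝ), (Complex.exp (-(θ:ℂ) * Complex.I) * (e x * (a:ℂ))).re
      = a * (Complex.exp (-(θ:ℂ) * Complex.I) * e x).re := by
    intro x a
    rw [show Complex.exp (-(θ:ℂ) * Complex.I) * (e x * (a:ℂ))
        = (a:ℂ) * (Complex.exp (-(θ:ℂ) * Complex.I) * e x) from by ring, Complex.re_ofReal_mul]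
  have h5 : (Complex.exp (-(θ:ℂ) * Complex.I) * S).re = ‖S‖ := by
    have h50 : Complex.exp (-(θ:ℂ) * Complex.I) * S = ((‖S‖ : ℝ) : ℂ) := by
      calc Complex.exp (-(θ:ℂ) * Complex.I) * S
          = Complex.exp (-(θ:ℂ) * Complex.I) * (((‖S‖ : ℝ) : ℂ)
              * Complex.exp ((θ:ℂ) * Complex.I)) := by
            rw [hθdef, Complex.norm_mul_exp_arg_mul_I S]
        _ = ((‖S‖ : ℝ) : ℂ) * (Complex.exp (-(θ:ℂ) * Complex.I)
              * Complex.exp ((θ:ℂ) * Complex.I)) := by ring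
        _ = ((‖S‖ : ℝ) : ℂ) := by rw [← Complex.exp_add]; simp
    rw [h50, Complex.ofReal_re]
  have habsS : ‖S‖ = ∑ i ∈ Finset.range m, w' i * c i := by
    rw [← h5]
    have hSre : Complex.exp (-(θ:ℂ) * Complex.I) * S
        = ∑ i ∈ Finset.range m, Complex.exp (-(θ:ℂ) * Complex.I)
            * (e (((r:ℝ) + i) / m) * (w' i : ℂ)) := by
      nth_rewrite 1 [hSdef]
      rw [reindexC (fun b => e ((b : ℝ) / m) * (w b : ℂ)), Finset.mul_sum]
      exact Finset.sum_congr rfl (fun i _ => by rw [hev i])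
    rw [hSre, Complex.re_sum]
    exact Finset.sum_congr rfl (fun i _ => by rw [hterm, hc' i])
  set z : ℂ := (∑ i ∈ Finset.range K, e (((r:ℝ) + i) / m))
      + (lam : ℂ) * e (((r:ℝ) + jj) / m) with hzdef
  have hzre : (∑ i ∈ Finset.range K, c i) + lam * c jj
      = (Complex.exp (-(θ:ℂ) * Complex.I) * z).re := by
    rw [hzdef, mul_add, Complex.add_re, Finset.mul_sum, Complex.re_sum]
    congr 1
    · exact Finset.sum_congr rfl (fun i _ => (hc' i).symm)
    · rw [show Complex.exp (-(θ:ℂ) * Complex.I) * ((lam:ℂ) * e (((r:ℝ) + jj) / m))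
          = (lam:ℂ) * (Complex.exp (-(θ:ℂ) * Complex.I) * e (((r:ℝ) + jj) / m)) from by ring,
        Complex.re_ofReal_mul, hc' jj]
  have hchain1 : ‖S‖ ≤ ‖z‖ / m := by
    rw [habsS]
    have hg := greedy m K jj hjjk hjjm lam c w' hw'0 hw'1 hc1 hc2 (by rw [hw'sum, hδKlam])
    refine le_trans hg ?_
    rw [show (∑ i ∈ Finset.range K, c i) / (m:ℝ) + lam / m * c jj
        = ((∑ i ∈ Finset.range K, c i) + lam * c jj) / m from by ring, hzre]
    have h6 : (Complex.exp (-(θ:ℂ) * Complex.I) * z).re ≤ ‖z‖ := by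
      refine le_trans (Complex.re_le_norm _) ?_
      rw [norm_mul, show -(θ:ℂ) * Complex.I = ((-θ : ℝ) : ℂ) * Complex.I from by push_cast; ring,
        Complex.norm_exp_ofReal_mul_I, one_mul]
    gcongr
  set Z : ℂ := (∑ i ∈ Finset.range K, e ((i:ℝ) / m)) + (lam : ℂ) * e ((K:ℝ) / m) with hZdef
  have habsz : ‖z‖ = ‖Z‖ := by
    set z0 : ℂ := (∑ i ∈ Finset.range K, e ((i:ℝ) / m)) + (lam : ℂ) * e ((jj:ℝ) / m) with hz0def
    have hfac : z = e ((r:ℝ) / m) * z0 := by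
      rw [hzdef, hz0def, mul_add, Finset.mul_sum]
      congr 1
      · refine Finset.sum_congr rfl (fun i _ => ?_)
        rw [← e_add]
        congr 1
        field_simp
      · rw [show e ((r:ℝ)/m) * ((lam:ℂ) * e ((jj:ℝ)/m)) = (lam:ℂ) * (e ((r:ℝ)/m) * e ((jj:ℝ)/m))
          from by ring, ← e_add]
        congr 2
        field_simp
    rw [hfac, norm_mul, abs_e, one_mul]
    by_cases hif : (r:ℝ) + K - t ≤ t - (r:ℝ) + 1
    · have hjjK : jj = K := by rw [hjjdef, if_pos hif]
      rw [hz0def, hjjK, hZdef]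
    · have hjjK : jj = m - 1 := by rw [hjjdef, if_neg hif]
      have hm1 : ((jj:ℕ):ℝ) = (m:ℝ) - 1 := by
        rw [hjjK]; push_cast [Nat.cast_sub (by omega : 1 ≤ m)]; ring
      rw [← Complex.norm_conj z0]
      have hconj : (starRingEnd ℂ) z0
          = (∑ i ∈ Finset.range K, e (-((i:ℝ) / m))) + (lam : ℂ) * e (-(((m:ℝ) - 1) / m)) := by
        rw [hz0def, map_add, map_sum, map_mul, Complex.conj_ofReal]
        rw [conj_e, hm1]
        exact congrArg₂ _ (Finset.sum_congr rfl (fun i _ => conj_e _)) rfl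
      have hmul : e (((K:ℝ) - 1) / m) * ((starRingEnd ℂ) z0) = Z := by
        rw [hconj, mul_add, Finset.mul_sum, hZdef]
        congr 1
        · rw [← Finset.sum_range_reflect (fun i => e ((i:ℝ) / m)) K]
          refine Finset.sum_congr rfl (fun i hi => ?_)
          rw [Finset.mem_range] at hi
          rw [← e_add]
          congr 1
          have : ((K - 1 - i : ℕ) : ℝ) = (K:ℝ) - 1 - i := by
            push_cast [Nat.cast_sub (by omega : i ≤ K - 1), Nat.cast_sub (by omega : 1 ≤ K)]
            ring
          rw [this]
          field_simp
          ring
        · rw [show e (((K:ℝ) - 1) / m) * ((lam:ℂ) * e (-(((m:ℝ) - 1) / m)))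
            = (lam:ℂ) * (e (((K:ℝ) - 1) / m) * e (-(((m:ℝ) - 1) / m))) from by ring, ← e_add,
            show ((K:ℝ) - 1) / m + -(((m:ℝ) - 1) / m) = (K:ℝ)/m + ((-1 : ℤ) : ℝ) from by
              push_cast; field_simp; ring,
            e_add, e_int, mul_one]
      rw [← hmul, norm_mul, abs_e, one_mul]
  have hZfac : Z = e (((K:ℝ) - 1) / (2 * m))
      * (((Real.sin (Real.pi * K / m) / Real.sin (Real.pi / m) : ℝ) : ℂ)
        + (lam : ℂ) * e (((K:ℝ) + 1) / (2 * m))) := by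
    rw [hZdef, geom_e m hm K, mul_add]
    congr 1
    rw [show e (((K:ℝ) - 1) / (2 * m)) * ((lam:ℂ) * e (((K:ℝ) + 1) / (2 * m)))
        = (lam:ℂ) * (e (((K:ℝ) - 1) / (2 * m)) * e (((K:ℝ) + 1) / (2 * m))) from by ring,
      ← e_add, show ((K:ℝ) - 1) / (2 * m) + ((K:ℝ) + 1) / (2 * m) = (K:ℝ) / m from by
        field_simp; ring]
  have hmC : ((m:ℝ) : ℂ) ≠ 0 := by exact_mod_cast ne_of_gt hM
  have hsin : (0:ℝ) < Real.sin (Real.pi / m) := by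
    apply Real.sin_pos_of_pos_of_lt_pi
    · positivity
    · rw [div_lt_iff₀ hM]; nlinarith
  have hsinC : ((Real.sin (Real.pi / m) : ℝ) : ℂ) ≠ 0 := by
    exact_mod_cast ne_of_gt hsin
  have hinner : ((m:ℝ) : ℂ) *
        ((Real.sin (Real.pi * (⌊δ * m⌋ : ℝ) / m) / (m * Real.sin (Real.pi / m)) : ℝ)
          + ((δ - (⌊δ * m⌋ : ℝ) / m : ℝ) : ℂ) * e (((⌊δ * m⌋ : ℝ) + 1) / (2 * m)))
      = ((Real.sin (Real.pi * K / m) / Real.sin (Real.pi / m) : ℝ) : ℂ)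
        + (lam : ℂ) * e (((K:ℝ) + 1) / (2 * m)) := by
    have hsinC2 : Complex.sin ((Real.pi : ℂ) / (m:ℂ)) ≠ 0 := by
      rw [show ((Real.pi:ℂ) / (m:ℂ)) = ((Real.pi / m : ℝ) : ℂ) by push_cast; ring,
        ← Complex.ofReal_sin]
      exact hsinC
    have hmC' : ((m:ℕ):ℂ) ≠ 0 := Nat.cast_ne_zero.mpr (by omega)
    have hsinC3 : Complex.sin ((Real.pi:ℂ) * (((m:ℕ):ℂ))⁻¹) ≠ 0 := by
      rw [show ((Real.pi:ℂ) * (((m:ℕ):ℂ))⁻¹) = ((Real.pi / m : ℝ) : ℂ) by push_cast; ring,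
        ← Complex.ofReal_sin]
      exact hsinC
    rw [← hKr, hlamdef]
    set E : ℂ := e (((K:ℝ) + 1) / (2 * m)) with hEdef
    push_cast
    field_simp [hsinC2, hsinC3, hmC']
  calc ‖S‖ ≤ ‖z‖ / m := hchain1
    _ = ‖Z‖ / m := by rw [habsz]
    _ = ‖
        ((Real.sin (Real.pi * (⌊δ * m⌋ : ℝ) / m) / (m * Real.sin (Real.pi / m)) : ℝ)
          + ((δ - (⌊δ * m⌋ : ℝ) / m : ℝ) : ℂ) * e (((⌊δ * m⌋ : ℝ) + 1) / (2 * m)))‖ := by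
      rw [hZfac, norm_mul, abs_e, one_mul, ← hinner, norm_mul, Complex.norm_real, Real.norm_eq_abs,
        _root_.abs_of_pos hM]
      field_simp
end

section
/- Let f, g : ℕ → ℂ be completely multiplicative functions. Then for all m, n ∈ ℕ, (f∗g)(mn) = ∑_{r | gcd(m,n)} μ(r)·f(r)·g(r)·(f∗g)(m/r)·(f∗g)(n/r), where ∗ denotes Dirichlet convolution and μ is the Möbius function. -/
open Finset ArithmeticFunction
open scoped ArithmeticFunction.Moebius

lemma sum_mu' (k : ℕ) : (∑ r ∈ k.divisors, (μ r : ℤ)) = if k = 1 then 1 else 0 := by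
  have h := congrArg (fun F : ArithmeticFunction ℤ => F k) moebius_mul_coe_zeta
  simp only [coe_mul_zeta_apply, one_apply] at h
  exact h

lemma key (m n d : ℕ) (hm : 0 < m) (hn : 0 < n) (hdmn : d ∣ m * n) (hd0 : d ≠ 0) :
    (∑ x ∈ (((Nat.gcd m n).divisors.sigma fun r => ((m / r).divisors ×ˢ (n / r).divisors)).filter
        (fun x => x.1 * x.2.1 * x.2.2 = d)), (μ x.1 : ℤ)) = 1 := by
  have hm0 : m ≠ 0 := hm.ne'
  have hn0 : n ≠ 0 := hn.ne'
  set s : Finset ℕ := d.divisors.filter (fun A => A ∣ m ∧ d / A ∣ n) with hs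
  have h1 : (∑ x ∈ (((Nat.gcd m n).divisors.sigma fun r =>
          ((m / r).divisors ×ˢ (n / r).divisors)).filter
        (fun x => x.1 * x.2.1 * x.2.2 = d)), (μ x.1 : ℤ))
      = ∑ y ∈ (s.sigma (fun A => (Nat.gcd A (n / (d / A))).divisors)), (μ y.2 : ℤ) := by
    apply Finset.sum_nbij' (i := fun x => ⟨x.1 * x.2.1, x.1⟩)
      (j := fun y => ⟨y.2, (y.1 / y.2, d / y.1)⟩)
    · -- hi
      rintro ⟨r, a, b⟩ hx
      simp only [Finset.mem_filter, Finset.mem_sigma, Finset.mem_product, Nat.mem_divisors,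
        hs] at hx ⊢
      obtain ⟨⟨⟨hrg, -⟩, ⟨ham, hmr0⟩, ⟨hbn, hnr0⟩⟩, heq⟩ := hx
      have hrm : r ∣ m := hrg.trans (Nat.gcd_dvd_left _ _)
      have hrn : r ∣ n := hrg.trans (Nat.gcd_dvd_right _ _)
      have hr0 : r ≠ 0 := by rintro rfl; simp at hmr0
      have hram : r * a ∣ m := (Nat.dvd_div_iff_mul_dvd hrm).mp ham
      have hrbn : r * b ∣ n := (Nat.dvd_div_iff_mul_dvd hrn).mp hbn
      have ha0 : a ≠ 0 := by rintro rfl; exact hmr0 (Nat.eq_zero_of_zero_dvd ham)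
      have hb0 : b ≠ 0 := by rintro rfl; exact hnr0 (Nat.eq_zero_of_zero_dvd hbn)
      have hra0 : r * a ≠ 0 := by positivity
      have hdra : d / (r * a) = b := by rw [← heq, Nat.mul_div_cancel_left _ (Nat.pos_of_ne_zero hra0)]
      have hrab : r * a ∣ d := ⟨b, heq.symm⟩
      refine ⟨⟨⟨hrab, hd0⟩, hram, ?_⟩, ?_, ?_⟩
      · rw [hdra]; exact (dvd_mul_left b r).trans hrbn
      · rw [hdra]
        exact Nat.dvd_gcd (dvd_mul_right r a)
          ((Nat.dvd_div_iff_mul_dvd ((dvd_mul_left b r).trans hrbn)).mpr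
            (by rwa [mul_comm]))
      · rw [hdra]
        exact fun h => hra0 (Nat.gcd_eq_zero_iff.mp h).1
    · -- hj
      rintro ⟨A, r⟩ hy
      simp only [Finset.mem_filter, Finset.mem_sigma, Finset.mem_product, Nat.mem_divisors,
        hs] at hy ⊢
      obtain ⟨⟨⟨hAd, -⟩, hAm, hdAn⟩, hr, hgne⟩ := hy
      have hrA : r ∣ A := hr.trans (Nat.gcd_dvd_left _ _)
      have hrndA : r ∣ n / (d / A) := hr.trans (Nat.gcd_dvd_right _ _)
      have hA0 : A ≠ 0 := by rintro rfl; exact hd0 (Nat.eq_zero_of_zero_dvd hAd)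
      have hr0 : r ≠ 0 := by rintro rfl; exact hgne (Nat.eq_zero_of_zero_dvd hr)
      have hrm : r ∣ m := hrA.trans hAm
      have hrn : r ∣ n := hrndA.trans (Nat.div_dvd_of_dvd hdAn)
      refine ⟨⟨⟨Nat.dvd_gcd hrm hrn, by simp [Nat.gcd_eq_zero_iff, hm0]⟩,
        ⟨?_, ?_⟩, ⟨?_, ?_⟩⟩, ?_⟩
      · exact (Nat.dvd_div_iff_mul_dvd hrm).mpr (by rwa [Nat.mul_div_cancel' hrA])
      · exact (Nat.div_pos (Nat.le_of_dvd hm hrm) (Nat.pos_of_ne_zero hr0)).ne'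
      · exact (Nat.dvd_div_iff_mul_dvd hrn).mpr
          (by rw [mul_comm]; exact (Nat.dvd_div_iff_mul_dvd hdAn).mp hrndA)
      · exact (Nat.div_pos (Nat.le_of_dvd hn hrn) (Nat.pos_of_ne_zero hr0)).ne'
      · rw [Nat.mul_div_cancel' hrA, Nat.mul_div_cancel' hAd]
    · -- left inverse
      rintro ⟨r, a, b⟩ hx
      simp only [Finset.mem_filter, Finset.mem_sigma, Finset.mem_product, Nat.mem_divisors] at hx
      obtain ⟨⟨⟨hrg, hg0⟩, ⟨ham, hmr0⟩, ⟨hbn, hnr0⟩⟩, heq⟩ := hx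
      have hr0 : r ≠ 0 := by rintro rfl; simp at hmr0
      have ha0 : a ≠ 0 := by rintro rfl; exact hmr0 (Nat.eq_zero_of_zero_dvd ham)
      have hra0 : r * a ≠ 0 := by positivity
      have e1 : r * a / r = a := Nat.mul_div_cancel_left _ (Nat.pos_of_ne_zero hr0)
      have e2 : d / (r * a) = b := by
        rw [← heq, Nat.mul_div_cancel_left _ (Nat.pos_of_ne_zero hra0)]
      simp only [e1, e2]
    · -- right inverse
      rintro ⟨A, r⟩ hy
      simp only [Finset.mem_filter, Finset.mem_sigma, Nat.mem_divisors, hs] at hy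
      obtain ⟨-, hr, -⟩ := hy
      have hrA : r ∣ A := hr.trans (Nat.gcd_dvd_left _ _)
      have e1 : r * (A / r) = A := Nat.mul_div_cancel' hrA
      simp only [e1]
    · rintro ⟨r, a, b⟩ _; rfl
  rw [h1, Finset.sum_sigma]
  have h2 : ∀ A ∈ s, (∑ r ∈ (Nat.gcd A (n / (d / A))).divisors, (μ r : ℤ))
      = if A = d / Nat.gcd d n then 1 else 0 := by
    intro A hA
    rw [sum_mu']
    simp only [Finset.mem_filter, Nat.mem_divisors, hs] at hA
    obtain ⟨⟨hAd, -⟩, hAm, hdAn⟩ := hA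
    have hA0 : A ≠ 0 := by rintro rfl; exact hd0 (Nat.eq_zero_of_zero_dvd hAd)
    have hdA0 : 0 < d / A := Nat.div_pos (Nat.le_of_dvd (Nat.pos_of_ne_zero hd0) hAd)
      (Nat.pos_of_ne_zero hA0)
    have hg0 : 0 < Nat.gcd d n := Nat.gcd_pos_of_pos_right d hn
    congr 1
    apply propext
    constructor
    · intro h1
      -- uniqueness
      have hdAg : d / A ∣ Nat.gcd d n := Nat.dvd_gcd (Nat.div_dvd_of_dvd hAd) hdAn
      set e := Nat.gcd d n / (d / A) with he_def
      have he : e * (d / A) = Nat.gcd d n := Nat.div_mul_cancel hdAg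
      have heA : e ∣ A := by
        have h2 : e * (d / A) ∣ A * (d / A) := by
          rw [he, Nat.mul_div_cancel' hAd]; exact Nat.gcd_dvd_left d n
        exact (Nat.mul_dvd_mul_iff_right hdA0).mp h2
      have hen : e ∣ n / (d / A) := (Nat.dvd_div_iff_mul_dvd hdAn).mpr
        (by rw [mul_comm, he]; exact Nat.gcd_dvd_right d n)
      have he1 : e = 1 := Nat.eq_one_of_dvd_one (h1 ▸ Nat.dvd_gcd heA hen)
      have : d / A = Nat.gcd d n := by rw [← he, he1, one_mul]
      rw [← Nat.div_div_self hAd hd0, this]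
    · rintro rfl
      have hdg : d / (d / Nat.gcd d n) = Nat.gcd d n :=
        Nat.div_div_self (Nat.gcd_dvd_left d n) hd0
      rw [hdg]
      exact Nat.coprime_div_gcd_div_gcd hg0
  rw [Finset.sum_congr rfl h2, Finset.sum_ite_eq' s (d / Nat.gcd d n) (fun _ => (1:ℤ))]
  rw [if_pos]
  -- membership
  simp only [Finset.mem_filter, Nat.mem_divisors, hs]
  have hg0 : 0 < Nat.gcd d n := Nat.gcd_pos_of_pos_right d hn
  have hA0d : d / Nat.gcd d n ∣ d := Nat.div_dvd_of_dvd (Nat.gcd_dvd_left d n)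
  have hdg : d / (d / Nat.gcd d n) = Nat.gcd d n :=
    Nat.div_div_self (Nat.gcd_dvd_left d n) hd0
  refine ⟨⟨hA0d, hd0⟩, ?_, by rw [hdg]; exact Nat.gcd_dvd_right d n⟩
  -- d / gcd d n ∣ m
  have hcop : Nat.Coprime (d / Nat.gcd d n) (n / Nat.gcd d n) :=
    Nat.coprime_div_gcd_div_gcd hg0
  have h3 : d / Nat.gcd d n ∣ m * (n / Nat.gcd d n) := by
    have h4 : (d / Nat.gcd d n) * Nat.gcd d n ∣ (m * (n / Nat.gcd d n)) * Nat.gcd d n := by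
      rw [Nat.div_mul_cancel (Nat.gcd_dvd_left d n), mul_assoc,
        Nat.div_mul_cancel (Nat.gcd_dvd_right d n)]
      exact hdmn
    exact (Nat.mul_dvd_mul_iff_right hg0).mp h4
  exact hcop.dvd_of_dvd_mul_right h3


/-- Dirichlet convolution of two functions `ℕ → ℂ`. -/
noncomputable def dconv (f g : ℕ → ℂ) (n : ℕ) : ℂ :=
  ∑ d ∈ n.divisors, f d * g (n / d)

theorem stmt_6 (f g : ℕ → ℂ)
    (hf : f 1 = 1 ∧ ∀ a b : ℕ, f (a * b) = f a * f b)
    (hg : g 1 = 1 ∧ ∀ a b : ℕ, g (a * b) = g a * g b)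
    (m n : ℕ) (hm : 0 < m) (hn : 0 < n) :
    dconv f g (m * n) =
      ∑ r ∈ (Nat.gcd m n).divisors,
        (moebius r : ℂ) * f r * g r * dconv f g (m / r) * dconv f g (n / r) := by
  have hm0 : m ≠ 0 := hm.ne'
  have hn0 : n ≠ 0 := hn.ne'
  set T := ((Nat.gcd m n).divisors.sigma fun r => ((m / r).divisors ×ˢ (n / r).divisors)) with hT
  have step1 : (∑ r ∈ (Nat.gcd m n).divisors,
        (moebius r : ℂ) * f r * g r * dconv f g (m / r) * dconv f g (n / r))
      = ∑ x ∈ T, (μ x.1 : ℂ) * (f (x.1 * x.2.1 * x.2.2) * g (m * n / (x.1 * x.2.1 * x.2.2))) := by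
    rw [hT, Finset.sum_sigma]
    apply Finset.sum_congr rfl
    intro r hr
    simp only [Nat.mem_divisors] at hr
    obtain ⟨hrg, -⟩ := hr
    have hrm : r ∣ m := hrg.trans (Nat.gcd_dvd_left _ _)
    have hrn : r ∣ n := hrg.trans (Nat.gcd_dvd_right _ _)
    have hr0 : r ≠ 0 := by rintro rfl; exact hm0 (Nat.eq_zero_of_zero_dvd hrm)
    rw [dconv, dconv]
    rw [show (μ r : ℂ) * f r * g r * (∑ a ∈ (m/r).divisors, f a * g (m / r / a)) *
        (∑ b ∈ (n/r).divisors, f b * g (n / r / b))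
      = ((μ r : ℂ) * f r * g r) * ((∑ a ∈ (m/r).divisors, f a * g (m / r / a)) *
        (∑ b ∈ (n/r).divisors, f b * g (n / r / b))) from by ring, Finset.sum_mul_sum]
    rw [show ((μ r : ℂ) * f r * g r) * (∑ a ∈ (m/r).divisors, ∑ b ∈ (n/r).divisors,
        (f a * g (m / r / a)) * (f b * g (n / r / b)))
      = ∑ a ∈ (m/r).divisors, ∑ b ∈ (n/r).divisors, (μ r : ℂ) * f r * g r *
        ((f a * g (m / r / a)) * (f b * g (n / r / b))) by
        rw [Finset.mul_sum]; exact Finset.sum_congr rfl fun a _ => by rw [Finset.mul_sum]]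
    rw [Finset.sum_product]
    apply Finset.sum_congr rfl; intro a ha
    apply Finset.sum_congr rfl; intro b hb
    simp only [Nat.mem_divisors] at ha hb
    obtain ⟨ham, hmr0⟩ := ha
    obtain ⟨hbn, hnr0⟩ := hb
    have ha0 : a ≠ 0 := by rintro rfl; exact hmr0 (Nat.eq_zero_of_zero_dvd ham)
    have hb0 : b ≠ 0 := by rintro rfl; exact hnr0 (Nat.eq_zero_of_zero_dvd hbn)
    have hram : r * a ∣ m := (Nat.dvd_div_iff_mul_dvd hrm).mp ham
    have hrbn : r * b ∣ n := (Nat.dvd_div_iff_mul_dvd hrn).mp hbn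
    obtain ⟨α, hα⟩ := hram
    obtain ⟨β, hβ⟩ := hrbn
    have hra0 : 0 < r * a := by positivity
    have hrb0 : 0 < r * b := by positivity
    have e1 : m / r / a = α := by
      rw [Nat.div_div_eq_div_mul, hα, Nat.mul_div_cancel_left _ hra0]
    have e2 : n / r / b = β := by
      rw [Nat.div_div_eq_div_mul, hβ, Nat.mul_div_cancel_left _ hrb0]
    have e3 : m * n / (r * a * b) = r * (α * β) := by
      rw [hα, hβ, show r * a * α * (r * b * β) = (r * a * b) * (r * (α * β)) by ring,
        Nat.mul_div_cancel_left]
      positivity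
    rw [e1, e2, e3, hf.2 (r * a) b, hf.2 r a, hg.2 r (α * β), hg.2 α β]
    ring
  rw [step1]
  have hmaps : ∀ x ∈ T, x.1 * x.2.1 * x.2.2 ∈ (m * n).divisors := by
    rintro ⟨r, a, b⟩ hx
    simp only [hT, Finset.mem_sigma, Finset.mem_product, Nat.mem_divisors] at hx ⊢
    obtain ⟨⟨hrg, -⟩, ⟨ham, hmr0⟩, ⟨hbn, hnr0⟩⟩ := hx
    have hrm : r ∣ m := hrg.trans (Nat.gcd_dvd_left _ _)
    have hrn : r ∣ n := hrg.trans (Nat.gcd_dvd_right _ _)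
    have hram : r * a ∣ m := (Nat.dvd_div_iff_mul_dvd hrm).mp ham
    have hbn' : b ∣ n := (dvd_mul_left b r).trans ((Nat.dvd_div_iff_mul_dvd hrn).mp hbn)
    exact ⟨mul_dvd_mul hram hbn', by positivity⟩
  rw [← Finset.sum_fiberwise_of_maps_to hmaps]
  rw [dconv]
  apply Finset.sum_congr rfl
  intro d hd
  simp only [Nat.mem_divisors] at hd
  obtain ⟨hdmn, -⟩ := hd
  have hd0 : d ≠ 0 := by
    rintro rfl
    exact absurd (Nat.eq_zero_of_zero_dvd hdmn) (by positivity)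
  symm
  calc (∑ x ∈ T.filter (fun x => x.1 * x.2.1 * x.2.2 = d),
        (μ x.1 : ℂ) * (f (x.1 * x.2.1 * x.2.2) * g (m * n / (x.1 * x.2.1 * x.2.2))))
      = ∑ x ∈ T.filter (fun x => x.1 * x.2.1 * x.2.2 = d),
        (μ x.1 : ℂ) * (f d * g (m * n / d)) := by
        apply Finset.sum_congr rfl
        intro x hx
        simp only [Finset.mem_filter] at hx
        rw [hx.2]
    _ = (∑ x ∈ T.filter (fun x => x.1 * x.2.1 * x.2.2 = d), (μ x.1 : ℂ)) *
        (f d * g (m * n / d)) := by rw [Finset.sum_mul]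
    _ = f d * g (m * n / d) := by
        have := key m n d hm hn hdmn hd0
        have hc : (∑ x ∈ T.filter (fun x => x.1 * x.2.1 * x.2.2 = d), (μ x.1 : ℂ)) = 1 := by
          have := congrArg (fun z : ℤ => (z : ℂ)) this
          push_cast at this
          simpa [hT] using this
        rw [hc, one_mul]
end

section
/- Let G be a finite abelian group, a ∈ G, and g : G → ℝ_{≥0}. Let δ := ĝ(χ₀) = 𝔼_{n∈G} g(n), where χ₀ is the trivial character. Then (1/|G|²)(g∗g∗g)(a) ≥ δ³ − M·(∑_{χ ≠ χ₀} |ĝ(χ)|²), where M := max{ max_{χ²≠χ₀} |ĝ(χ)|, max_{χ²=χ₀, χ(a)ĝ(χ)<0} (−χ(a)ĝ(χ)) } (with the maxima interpreted as 0 if the corresponding sets are empty). -/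
open scoped Classical

open Finset

/-- The normalized Fourier coefficient `ĝ(χ) = (1/|G|) ∑ₙ g(n) conj(χ(n))`. -/
noncomputable def fhat {G : Type*} [CommGroup G] [Fintype G] (g : G → ℝ) (χ : G →* ℂ) : ℂ :=
  (∑ n : G, (g n : ℂ) * (starRingEnd ℂ) (χ n)) / Fintype.card G

section Aux

variable {G : Type*} [CommGroup G] [Fintype G]

lemma char_abs (χ : G →* ℂ) (n : G) : ‖χ n‖ = 1 := by
  have h : (χ n) ^ Fintype.card G = 1 := by rw [← map_pow, pow_card_eq_one, map_one]
  simpa using Complex.norm_eq_one_of_pow_eq_one h Fintype.card_ne_zero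

lemma char_ne_zero (χ : G →* ℂ) (n : G) : χ n ≠ 0 := by
  intro h
  have := char_abs χ n
  rw [h] at this
  simp at this

lemma char_conj (χ : G →* ℂ) (n : G) : (starRingEnd ℂ) (χ n) = χ n⁻¹ := by
  have h2 : χ n * (starRingEnd ℂ) (χ n) = 1 := by
    rw [Complex.mul_conj]
    norm_cast
    rw [Complex.normSq_eq_norm_sq, char_abs]
    norm_num
  have h1 : χ n * χ n⁻¹ = 1 := by rw [← map_mul, mul_inv_cancel, map_one]
  exact mul_left_cancel₀ (char_ne_zero χ n) (h2.trans h1.symm)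

variable [Fintype (G →* ℂ)]

/-- Equivalence between additive characters of `Additive G` and monoid homs. -/
noncomputable def charEquiv : AddChar (Additive G) ℂ ≃ (G →* ℂ) where
  toFun ψ := (AddChar.toMonoidHomEquiv ψ).comp (MulEquiv.multiplicativeAdditive G).symm.toMonoidHom
  invFun χ := AddChar.toMonoidHomEquiv.symm (χ.comp (MulEquiv.multiplicativeAdditive G).toMonoidHom)
  left_inv ψ := by ext x; rfl
  right_inv χ := by ext x; rfl

lemma char_sum (x : G) :
    ∑ χ : G →* ℂ, χ x = if x = 1 then (Fintype.card G : ℂ) else 0 := by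
  classical
  have h := AddChar.sum_apply_eq_ite (α := Additive G) (Additive.ofMul x)
  have he : ∑ ψ : AddChar (Additive G) ℂ, ψ (Additive.ofMul x) = ∑ χ : G →* ℂ, χ x :=
    Fintype.sum_equiv charEquiv _ _ (fun ψ => rfl)
  rw [← he, h]
  have hcard : Fintype.card (Additive G) = Fintype.card G :=
    Fintype.card_congr Additive.toMul
  by_cases hx : x = 1
  · simp [hx, hcard]
  · have hx' : Additive.ofMul x ≠ 0 := by simpa using hx
    simp [hx, hx']

lemma inversion (a : G) (g : G → ℝ) :
    ∑ χ : G →* ℂ, χ a * (fhat g χ) ^ 3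
      = (∑ b₁ : G, ∑ b₂ : G, ((g b₁ : ℂ) * (g b₂ : ℂ) * (g ((b₁ * b₂)⁻¹ * a) : ℂ)))
        / (Fintype.card G : ℂ) ^ 2 := by
  classical
  have hN : (Fintype.card G : ℂ) ≠ 0 := Nat.cast_ne_zero.mpr Fintype.card_ne_zero
  have step1 : ∀ χ : G →* ℂ, χ a * (fhat g χ) ^ 3
      = (∑ n₁ : G, ∑ n₂ : G, ∑ n₃ : G,
          (g n₁ : ℂ) * (g n₂ : ℂ) * (g n₃ : ℂ) * χ ((n₁ * n₂ * n₃)⁻¹ * a))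
        / (Fintype.card G : ℂ) ^ 3 := by
    intro χ
    have hf : fhat g χ = (∑ n : G, (g n : ℂ) * χ n⁻¹) / Fintype.card G := by
      unfold fhat
      congr 1
      exact Finset.sum_congr rfl fun n _ => by rw [char_conj]
    rw [hf, div_pow, ← mul_div_assoc]
    congr 1
    rw [pow_three]
    simp only [Finset.sum_mul, Finset.mul_sum]
    refine Finset.sum_congr rfl fun n₁ _ => Finset.sum_congr rfl fun n₂ _ =>
      Finset.sum_congr rfl fun n₃ _ => ?_
    simp only [mul_inv_rev, map_mul, map_inv]
    ring
  calc ∑ χ : G →* ℂ, χ a * (fhat g χ) ^ 3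
      = (∑ χ : G →* ℂ, ∑ n₁ : G, ∑ n₂ : G, ∑ n₃ : G,
          (g n₁ : ℂ) * (g n₂ : ℂ) * (g n₃ : ℂ) * χ ((n₁ * n₂ * n₃)⁻¹ * a))
        / (Fintype.card G : ℂ) ^ 3 := by
        simp only [step1]
        rw [← Finset.sum_div]
    _ = (∑ n₁ : G, ∑ n₂ : G, ∑ n₃ : G, ∑ χ : G →* ℂ,
          (g n₁ : ℂ) * (g n₂ : ℂ) * (g n₃ : ℂ) * χ ((n₁ * n₂ * n₃)⁻¹ * a))
        / (Fintype.card G : ℂ) ^ 3 := by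
        congr 1
        rw [Finset.sum_comm]
        refine Finset.sum_congr rfl fun n₁ _ => ?_
        rw [Finset.sum_comm]
        exact Finset.sum_congr rfl fun n₂ _ => Finset.sum_comm
    _ = (∑ n₁ : G, ∑ n₂ : G,
          (g n₁ : ℂ) * (g n₂ : ℂ) * (g ((n₁ * n₂)⁻¹ * a) : ℂ) * (Fintype.card G : ℂ))
        / (Fintype.card G : ℂ) ^ 3 := by
        congr 1
        refine Finset.sum_congr rfl fun n₁ _ => Finset.sum_congr rfl fun n₂ _ => ?_
        have key : ∀ n₃ : G, ∑ χ : G →* ℂ, (g n₁ : ℂ) * (g n₂ : ℂ) * (g n₃ : ℂ)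
            * χ ((n₁ * n₂ * n₃)⁻¹ * a)
            = if n₃ = (n₁ * n₂)⁻¹ * a then
                (g n₁ : ℂ) * (g n₂ : ℂ) * (g n₃ : ℂ) * (Fintype.card G : ℂ) else 0 := by
          intro n₃
          rw [← Finset.mul_sum, char_sum]
          have hiff : (n₁ * n₂ * n₃)⁻¹ * a = 1 ↔ n₃ = (n₁ * n₂)⁻¹ * a := by
            rw [inv_mul_eq_one]
            constructor
            · intro h; rw [← h]; group
            · intro h; rw [h]; group
          rw [if_congr hiff rfl rfl]
          split_ifs with h
          · rfl
          · simp
        refine (Finset.sum_congr rfl fun n₃ _ => key n₃).trans ?_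
        rw [Finset.sum_ite_eq' Finset.univ]
        simp
    _ = (∑ b₁ : G, ∑ b₂ : G, ((g b₁ : ℂ) * (g b₂ : ℂ) * (g ((b₁ * b₂)⁻¹ * a) : ℂ)))
        / (Fintype.card G : ℂ) ^ 2 := by
        have hdist : (∑ n₁ : G, ∑ n₂ : G,
            (g n₁ : ℂ) * (g n₂ : ℂ) * (g ((n₁ * n₂)⁻¹ * a) : ℂ) * (Fintype.card G : ℂ))
            = (∑ n₁ : G, ∑ n₂ : G,
              (g n₁ : ℂ) * (g n₂ : ℂ) * (g ((n₁ * n₂)⁻¹ * a) : ℂ)) * (Fintype.card G : ℂ) := by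
          rw [Finset.sum_mul]
          exact Finset.sum_congr rfl fun n₁ _ => (Finset.sum_mul _ _ _).symm
        rw [hdist, div_eq_div_iff (pow_ne_zero 3 hN) (pow_ne_zero 2 hN)]
        ring

end Aux

theorem stmt_13 {G : Type*} [CommGroup G] [Fintype G] [Fintype (G →* ℂ)]
    (a : G) (g : G → ℝ) (hg : ∀ n, 0 ≤ g n)
    (δ : ℝ) (hδ : δ = (∑ n : G, g n) / Fintype.card G)
    (M : ℝ) (hM0 : 0 ≤ M)
    (hMcomplex : ∀ χ : G →* ℂ, χ ^ 2 ≠ 1 → ‖fhat g χ‖ ≤ M)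
    (hMreal : ∀ χ : G →* ℂ, χ ^ 2 = 1 → (χ a * fhat g χ).re < 0 →
      -(χ a * fhat g χ).re ≤ M) :
    δ ^ 3 - M * ∑ χ ∈ Finset.univ.filter (fun χ : G →* ℂ => χ ≠ 1),
        ‖fhat g χ‖ ^ 2
      ≤ (∑ b₁ : G, ∑ b₂ : G, g b₁ * g b₂ * g ((b₁ * b₂)⁻¹ * a)) / (Fintype.card G : ℝ) ^ 2 := by
  classical
  set RHS : ℝ := (∑ b₁ : G, ∑ b₂ : G, g b₁ * g b₂ * g ((b₁ * b₂)⁻¹ * a))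
      / (Fintype.card G : ℝ) ^ 2 with hRHS
  have hinv : (∑ χ : G →* ℂ, χ a * (fhat g χ) ^ 3) = (RHS : ℂ) := by
    rw [inversion a g, hRHS]
    push_cast
    rfl
  have hre : RHS = ∑ χ : G →* ℂ, (χ a * (fhat g χ) ^ 3).re := by
    rw [← Complex.re_sum, hinv, Complex.ofReal_re]
  have h1 : ((1 : G →* ℂ) a * (fhat g (1 : G →* ℂ)) ^ 3).re = δ ^ 3 := by
    have hf1 : fhat g (1 : G →* ℂ) = (δ : ℂ) := by
      unfold fhat
      rw [hδ]
      push_cast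
      simp
    rw [hf1]
    simp only [MonoidHom.one_apply, one_mul, ← Complex.ofReal_pow, Complex.ofReal_re]
  have hsplit : ∑ χ : G →* ℂ, (χ a * (fhat g χ) ^ 3).re
      = δ ^ 3 + ∑ χ ∈ Finset.univ.filter (fun χ : G →* ℂ => χ ≠ 1),
          (χ a * (fhat g χ) ^ 3).re := by
    rw [← Finset.sum_filter_add_sum_filter_not Finset.univ (fun χ : G →* ℂ => χ = 1)]
    congr 1
    · rw [Finset.filter_eq' Finset.univ (1 : G →* ℂ)]
      simpa using h1
  have hbound : ∀ χ : G →* ℂ, -(M * ‖fhat g χ‖ ^ 2) ≤ (χ a * (fhat g χ) ^ 3).re := by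
    intro χ
    by_cases hχ2 : χ ^ 2 = 1
    · have hval : ∀ n : G, (starRingEnd ℂ) (χ n) = χ n := by
        intro n
        have h2 : χ n * χ n = 1 := by
          have := DFunLike.congr_fun hχ2 n
          simpa [pow_two] using this
        rw [char_conj, map_inv]
        exact inv_eq_of_mul_eq_one_right h2
      have hconjf : (starRingEnd ℂ) (fhat g χ) = fhat g χ := by
        unfold fhat
        rw [map_div₀, map_sum]
        simp [hval, Complex.conj_ofReal, map_mul]
      set r : ℝ := (fhat g χ).re with hr
      set s : ℝ := (χ a).re with hs
      have hfr : fhat g χ = (r : ℂ) := (Complex.conj_eq_iff_re.mp hconjf).symm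
      have hsa : χ a = (s : ℂ) := (Complex.conj_eq_iff_re.mp (hval a)).symm
      have habs2 : ‖fhat g χ‖ ^ 2 = r ^ 2 := by
        rw [hfr, Complex.norm_real, Real.norm_eq_abs, sq_abs]
      have hterm : (χ a * fhat g χ ^ 3).re = s * r ^ 3 := by
        rw [hsa, hfr, ← Complex.ofReal_pow, ← Complex.ofReal_mul, Complex.ofReal_re]
      have hsr : (χ a * fhat g χ).re = s * r := by
        rw [hsa, hfr, ← Complex.ofReal_mul, Complex.ofReal_re]
      rw [hterm, habs2]
      by_cases hneg : (χ a * fhat g χ).re < 0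
      · have hM := hMreal χ hχ2 hneg
        rw [hsr] at hM
        nlinarith [mul_nonneg (by linarith : (0:ℝ) ≤ s * r + M) (sq_nonneg r)]
      · push_neg at hneg
        rw [hsr] at hneg
        nlinarith [mul_nonneg hneg (sq_nonneg r), mul_nonneg hM0 (sq_nonneg r)]
    · have habs : ‖χ a * (fhat g χ) ^ 3‖ = ‖fhat g χ‖ ^ 3 := by
        rw [norm_mul, norm_pow, char_abs, one_mul]
      have hge : -(‖fhat g χ‖ ^ 3) ≤ (χ a * (fhat g χ) ^ 3).re := by
        rw [← habs]
        have h1 := Complex.abs_re_le_norm (χ a * (fhat g χ) ^ 3)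
        have h2 := neg_abs_le ((χ a * (fhat g χ) ^ 3).re)
        linarith [abs_nonneg ((χ a * (fhat g χ) ^ 3).re)]
      refine le_trans ?_ hge
      have hMle := hMcomplex χ hχ2
      have h2 : ‖fhat g χ‖ ^ 3
          = ‖fhat g χ‖ * ‖fhat g χ‖ ^ 2 := by ring
      rw [h2]
      have := mul_le_mul_of_nonneg_right hMle (sq_nonneg (‖fhat g χ‖))
      linarith
  have hle : -(M * ∑ χ ∈ Finset.univ.filter (fun χ : G →* ℂ => χ ≠ 1),
      ‖fhat g χ‖ ^ 2)
      ≤ ∑ χ ∈ Finset.univ.filter (fun χ : G →* ℂ => χ ≠ 1), (χ a * (fhat g χ) ^ 3).re := by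
    have h2 : ∑ χ ∈ Finset.univ.filter (fun χ : G →* ℂ => χ ≠ 1),
        -(M * ‖fhat g χ‖ ^ 2)
        = -(M * ∑ χ ∈ Finset.univ.filter (fun χ : G →* ℂ => χ ≠ 1),
            ‖fhat g χ‖ ^ 2) := by
      rw [Finset.mul_sum]
      simp
    rw [← h2]
    exact Finset.sum_le_sum fun χ _ => hbound χ
  have hR : RHS = δ ^ 3 + ∑ χ ∈ Finset.univ.filter (fun χ : G →* ℂ => χ ≠ 1),
      (χ a * (fhat g χ) ^ 3).re := hre.trans hsplit
  linarith
end

section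
/- Let q ∈ ℕ, let ψ be a quadratic Dirichlet character mod q, and define the multiplicative function h by h(d) = ∑_{r | d} (μ(r)ψ(r)/(dr))·(1∗ψ)(d/r). Then for every prime p, h(p) = (1+ψ(p))/p − ψ(p)/p², and for every prime power p^k, |h(p^k)| ≤ 2k/p^k. -/
open Finset ArithmeticFunction

theorem stmt_14 (q : ℕ) (ψ : DirichletCharacter ℝ q) (hψ : ψ ^ 2 = 1)
    (h : ℕ → ℝ)
    (hh : ∀ d : ℕ, h d = ∑ r ∈ d.divisors,
      (moebius r : ℝ) * ψ (r : ZMod q) / (d * r) *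
        ∑ s ∈ (d / r).divisors, ψ (s : ZMod q)) :
    (∀ p : ℕ, p.Prime →
      h p = (1 + ψ (p : ZMod q)) / p - ψ (p : ZMod q) / (p : ℝ) ^ 2) ∧
      ∀ p k : ℕ, p.Prime → 1 ≤ k → |h (p ^ k)| ≤ 2 * k / (p : ℝ) ^ k := by
  have key : ∀ p k : ℕ, p.Prime → 1 ≤ k →
      h (p ^ k) = (∑ j ∈ range (k + 1), (ψ (p : ZMod q)) ^ j) / (p : ℝ) ^ k
        - ψ (p : ZMod q) * (∑ j ∈ range k, (ψ (p : ZMod q)) ^ j) / (p : ℝ) ^ (k + 1) := by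
    intro p k hp hk
    have hp0 : (0 : ℝ) < (p : ℝ) := by exact_mod_cast hp.pos
    rw [hh, Nat.sum_divisors_prime_pow hp]
    have step : ∀ i ∈ range (k + 1),
        ((moebius (p ^ i) : ℝ) * ψ ((p ^ i : ℕ) : ZMod q) / ((p ^ k : ℕ) * ((p ^ i : ℕ) : ℝ)) *
          ∑ s ∈ (p ^ k / p ^ i).divisors, ψ (s : ZMod q))
        = (moebius (p ^ i) : ℝ) * (ψ (p : ZMod q)) ^ i / ((p : ℝ) ^ k * (p : ℝ) ^ i) *
          ∑ j ∈ range (k - i + 1), (ψ (p : ZMod q)) ^ j := by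
      intro i hi
      have hik : i ≤ k := by have := Finset.mem_range.mp hi; omega
      have h1 : (p : ℕ) ^ k / p ^ i = p ^ (k - i) := Nat.pow_div hik hp.pos
      rw [h1, Nat.sum_divisors_prime_pow hp]
      have h2 : ∀ j : ℕ, ψ ((p ^ j : ℕ) : ZMod q) = (ψ (p : ZMod q)) ^ j := by
        intro j; push_cast; exact map_pow ψ _ j
      simp only [h2]
      push_cast
      ring
    rw [Finset.sum_congr rfl step]
    rw [← Finset.sum_subset (Finset.range_subset_range.mpr (by omega : 2 ≤ k + 1))]
    · rw [Finset.sum_range_succ, Finset.sum_range_one]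
      simp only [pow_zero, pow_one, moebius_apply_one, moebius_apply_prime hp]
      have : k - 0 = k := by omega
      rw [this]
      have : k - 1 + 1 = k := by omega
      rw [this]
      push_cast
      rw [pow_succ]
      ring
    · intro i _ hi2
      have : 2 ≤ i := by simp at hi2; omega
      rw [moebius_apply_prime_pow hp (by omega)]
      rw [if_neg (by omega)]
      simp
  have htval : ∀ p : ℕ, p.Prime → ψ (p : ZMod q) = 1 ∨ ψ (p : ZMod q) = -1 ∨
      ψ (p : ZMod q) = 0 := by
    intro p hp
    by_cases hu : IsUnit ((p : ℕ) : ZMod q)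
    · have h1 : ψ (p : ZMod q) * ψ (p : ZMod q) = 1 := by
        have := congrArg (fun χ : DirichletCharacter ℝ q => χ (p : ZMod q)) hψ
        simpa [pow_two, MulChar.one_apply hu] using this
      rcases mul_self_eq_one_iff.mp h1 with h | h
      · exact Or.inl h
      · exact Or.inr (Or.inl h)
    · exact Or.inr (Or.inr (ψ.map_nonunit hu))
  constructor
  · intro p hp
    have := key p 1 hp le_rfl
    rw [pow_one] at this
    rw [this]
    norm_num
    ring
  · intro p k hp hk
    have hp0 : (0 : ℝ) < (p : ℝ) := by exact_mod_cast hp.pos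
    have hP : (0 : ℝ) < (p : ℝ) ^ k := by positivity
    have hp2 : (2 : ℝ) ≤ (p : ℝ) := by exact_mod_cast hp.two_le
    have hk1 : (1 : ℝ) ≤ (k : ℝ) := by exact_mod_cast hk
    have hkey := key p k hp hk
    rcases htval p hp with ht | ht | ht
    · -- ψ p = 1
      rw [ht] at hkey
      simp only [one_pow, Finset.sum_const, Finset.card_range, nsmul_eq_mul, mul_one,
        one_mul] at hkey
      rw [hkey]
      have h1 : ((k : ℝ) + 1) / (p : ℝ) ^ k - k / (p : ℝ) ^ (k + 1) ≤ 2 * k / (p : ℝ) ^ k := by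
        have : (k : ℝ) / (p : ℝ) ^ (k + 1) ≥ 0 := by positivity
        have h2 : ((k : ℝ) + 1) / (p : ℝ) ^ k ≤ 2 * k / (p : ℝ) ^ k := by
          gcongr; linarith
        linarith
      have h0 : 0 ≤ ((k : ℝ) + 1) / (p : ℝ) ^ k - k / (p : ℝ) ^ (k + 1) := by
        have h3 : (k : ℝ) / (p : ℝ) ^ (k + 1) ≤ (k : ℝ) / (p : ℝ) ^ k := by
          gcongr
          · linarith
          · linarith
        have : 0 ≤ (k : ℝ) / (p : ℝ) ^ k := by positivity
        have h4 : (k : ℝ) / (p : ℝ) ^ k ≤ ((k : ℝ) + 1) / (p : ℝ) ^ k := by gcongr <;> linarith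
        linarith
      push_cast at hkey ⊢
      rw [abs_of_nonneg (by push_cast at h0 ⊢; linarith [h0])]
      push_cast at h1 ⊢
      linarith
    · -- ψ p = -1
      rw [ht] at hkey
      rw [neg_one_geom_sum, neg_one_geom_sum, neg_one_mul, neg_div, sub_neg_eq_add] at hkey
      set a : ℝ := if Even (k + 1) then (0:ℝ) else 1 with ha
      set b : ℝ := if Even k then (0:ℝ) else 1 with hb
      have hA : 0 ≤ a ∧ a ≤ 1 := by rw [ha]; split <;> norm_num
      have hB : 0 ≤ b ∧ b ≤ 1 := by rw [hb]; split <;> norm_num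
      have hP' : (0 : ℝ) < (p : ℝ) ^ (k + 1) := by positivity
      have hpk1 : (p : ℝ) ^ k ≤ (p : ℝ) ^ (k + 1) :=
        pow_le_pow_right₀ (by linarith) (by omega)
      rw [hkey, abs_of_nonneg (by positivity)]
      have e1 : a / (p : ℝ) ^ k ≤ 1 / (p : ℝ) ^ k := by gcongr; exact hA.2
      have e2 : b / (p : ℝ) ^ (k + 1) ≤ 1 / (p : ℝ) ^ k :=
        div_le_div₀ (by norm_num) hB.2 hP hpk1
      have e3 : (1:ℝ) / (p : ℝ) ^ k + 1 / (p : ℝ) ^ k ≤ 2 * k / (p : ℝ) ^ k := by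
        rw [← add_div, div_le_div_iff₀ hP hP]
        nlinarith
      linarith
    · -- ψ p = 0
      rw [ht] at hkey
      have hS : ∀ n : ℕ, ∑ j ∈ range (n + 1), (0 : ℝ) ^ j = 1 := by
        intro n
        rw [Finset.sum_range_succ']
        simp [zero_pow]
      rw [hS k] at hkey
      rw [hkey]
      simp only [zero_mul, zero_div, sub_zero]
      rw [abs_of_nonneg (by positivity)]
      gcongr
      linarith
end

section
/- For δ₁, δ₂, δ₃ ∈ (0,1], define F^♯(δ₁,δ₂,δ₃) := 1 − (|sin(πδ₂)|/(πδ₁δ₂δ₃))·√((δ₁−δ₁²)(δ₃−δ₃²)). Then F^♯(δ,δ,δ) > 0 whenever δ ∈ [0.43, 1]. In particular, δ³ − (sin(πδ)/π)·(δ − δ²) > 0 for δ ∈ [0.43, 1). -/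
/-! Since `|sin| ≤ 1`, both claims reduce to `δ - δ² < π δ³`, i.e. `1 - δ < π δ²`,
which holds for `δ ≥ 0.43` because `π · 0.43² > 0.58 > 1 - 0.43`. -/

/-- `F♯(δ₁, δ₂, δ₃)` from the sieve theorem for short intervals. -/
noncomputable def calFsharp (δ₁ δ₂ δ₃ : ℝ) : ℝ :=
  1 - |Real.sin (Real.pi * δ₂)| / (Real.pi * δ₁ * δ₂ * δ₃) *
        Real.sqrt ((δ₁ - δ₁ ^ 2) * (δ₃ - δ₃ ^ 2))

open Real

lemma calFsharp_self {δ : ℝ} (h₀ : 0 ≤ δ) (h₁ : δ ≤ 1) :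
    calFsharp δ δ δ = 1 - |sin (π * δ)| * (δ - δ ^ 2) / (π * δ ^ 3) := by
  have hnn : 0 ≤ δ - δ ^ 2 := by nlinarith
  rw [calFsharp, sqrt_mul_self hnn]
  ring

lemma sub_sq_lt_pi_mul_pow_three {δ : ℝ} (h : 0.43 ≤ δ) : δ - δ ^ 2 < π * δ ^ 3 := by
  have hπ := pi_gt_d2
  have hδ : 0 < δ := by linarith
  have hquad : 1 - δ < π * δ ^ 2 := by nlinarith
  nlinarith

lemma abs_sin_pi_mul_mul_sub_sq_lt {δ : ℝ} (h₀ : 0.43 ≤ δ) (h₁ : δ ≤ 1) :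
    |sin (π * δ)| * (δ - δ ^ 2) < π * δ ^ 3 :=
  calc |sin (π * δ)| * (δ - δ ^ 2)
      ≤ 1 * (δ - δ ^ 2) := by
        have hnn : 0 ≤ δ - δ ^ 2 := by nlinarith
        gcongr
        exact abs_sin_le_one _
    _ < π * δ ^ 3 := by rw [one_mul]; exact sub_sq_lt_pi_mul_pow_three h₀

theorem stmt_18 :
    (∀ δ : ℝ, δ ∈ Set.Icc (0.43 : ℝ) 1 → 0 < calFsharp δ δ δ) ∧
      ∀ δ : ℝ, δ ∈ Set.Ico (0.43 : ℝ) 1 →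
        0 < δ ^ 3 - Real.sin (Real.pi * δ) / Real.pi * (δ - δ ^ 2) := by
  constructor
  · rintro δ ⟨h₀, h₁⟩
    have hδ : 0 < δ := by linarith
    rw [calFsharp_self hδ.le h₁, sub_pos, div_lt_one (by positivity)]
    exact abs_sin_pi_mul_mul_sub_sq_lt h₀ h₁
  · rintro δ ⟨h₀, h₁⟩
    have hnn : 0 ≤ δ - δ ^ 2 := by nlinarith
    rw [sub_pos, div_mul_eq_mul_div, div_lt_iff₀ pi_pos]
    calc sin (π * δ) * (δ - δ ^ 2)
        ≤ |sin (π * δ)| * (δ - δ ^ 2) := by gcongr; exact le_abs_self _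
      _ < π * δ ^ 3 := abs_sin_pi_mul_mul_sub_sq_lt h₀ h₁.le
      _ = δ ^ 3 * π := mul_comm _ _
end
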